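/- Every strongly connected semicomplete composition Q = T[H_1, ..., H_t] with at least six vertices has at least five 4-kings. -/

import Mathlib

/-- There is a directed walk (equivalently, path) of length at most `k` from `x` to `y`. -/
def KReach {V : Type*} (A : V → V → Prop) (k : ℕ) (x y : V) : Prop :=
  ∃ n : ℕ, n ≤ k ∧ ∃ f : ℕ → V, f 0 = x ∧ f n = y ∧ ∀ i < n, A (f i) (f (i + 1))

/-- `x` is a `k`-king: it reaches every vertex by a path of length at most `k`. -/
def IsKKing {V : Type*} (A : V → V → Prop) (k : ℕ) (x : V) : Prop :=
  ∀ y : V, KReach A k x y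

/-- A strict `k`-king: a `k`-king with some vertex at distance exactly `k`. -/
def IsStrictKKing {V : Type*} (A : V → V → Prop) (k : ℕ) (x : V) : Prop :=
  IsKKing A k x ∧ ∃ y : V, ¬ KReach A (k - 1) x y

/-- Strong connectivity of a digraph. -/
def Strong {V : Type*} (A : V → V → Prop) : Prop :=
  ∀ x y : V, ∃ k : ℕ, KReach A k x y

/-- Semicomplete digraph: at least one arc between any two distinct vertices. -/
def Semicomplete {V : Type*} (A : V → V → Prop) : Prop :=
  ∀ x y : V, x ≠ y → A x y ∨ A y x

/-- Tournament: exactly one arc between any two distinct vertices, no loops. -/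
def IsTournament {V : Type*} (A : V → V → Prop) : Prop :=
  Irreflexive A ∧ ∀ x y : V, x ≠ y → (A x y ↔ ¬ A y x)

/-- Out-degree of a vertex. -/
noncomputable def outDeg {V : Type*} (A : V → V → Prop) (x : V) : ℕ :=
  Set.ncard {y | A x y}

/-- There is a directed cycle of length exactly `k` through `x`. -/
def CycleThrough {V : Type*} (A : V → V → Prop) (k : ℕ) (x : V) : Prop :=
  ∃ f : ℕ → V, f 0 = x ∧ f k = x ∧ (∀ i < k, A (f i) (f (i + 1))) ∧
    ∀ i j, i < k → j < k → f i = f j → i = j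

/-- `x` belongs to a directed cycle of length at most `k`. -/
def OnShortCycle {V : Type*} (A : V → V → Prop) (k : ℕ) (x : V) : Prop :=
  ∃ n : ℕ, 2 ≤ n ∧ n ≤ k ∧ CycleThrough A n x

/-- `AQ` (on `W`) is the composition `T[H_1, …, H_t]` of digraphs over the digraph `AT`
(on index type `ι`), where the fiber of `π` over `i` is the vertex set of `H_i`
(each fiber is nonempty since `π` is surjective), the arcs of `H_i` are the arcs of
`AQ` inside the fiber over `i`, and arcs between different fibers are determined by `AT`. -/
structure IsComposition {ι W : Type*} (AT : ι → ι → Prop) (AQ : W → W → Prop)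
    (π : W → ι) : Prop where
  surj : Function.Surjective π
  cross : ∀ x y : W, π x ≠ π y → (AQ x y ↔ AT (π x) (π y))

/-- The digraph `H_i`: the induced subdigraph on the fiber of `π` over `i`. -/
def FiberArc {ι W : Type*} (AQ : W → W → Prop) (π : W → ι) (i : ι) :
    {w : W // π w = i} → {w : W // π w = i} → Prop :=
  fun a b => AQ a.1 b.1

/-- The induced subdigraph on the vertices satisfying `P`. -/
def DelArc {V : Type*} (A : V → V → Prop) (P : V → Prop) :
    {v : V // P v} → {v : V // P v} → Prop :=
  fun a b => A a.1 b.1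

/-- `{v}` is a `k`-absorbent set: every other vertex reaches `v` in at most `k` steps. -/
def SingletonAbsorbent {V : Type*} (A : V → V → Prop) (k : ℕ) (v : V) : Prop :=
  ∀ x : V, x ≠ v → KReach A k x v

/-- A quasi-kernel: an independent set `K` such that every vertex outside `K`
reaches some vertex of `K` by a path of length at most 2. -/
def QuasiKernel {V : Type*} (A : V → V → Prop) (K : Set V) : Prop :=
  (∀ x ∈ K, ∀ y ∈ K, x ≠ y → ¬ A x y) ∧ ∀ x ∉ K, ∃ y ∈ K, KReach A 2 x y

/-- A `k`-kernel: a `k`-independent and `(k-1)`-absorbent set. -/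
def KKernel {V : Type*} (A : V → V → Prop) (k : ℕ) (K : Set V) : Prop :=
  (∀ x ∈ K, ∀ y ∈ K, x ≠ y → ¬ KReach A (k - 1) x y) ∧
    ∀ x ∉ K, ∃ y ∈ K, KReach A (k - 1) x y

/-!
Write `K` for the 2-kings of `T` and `R n` for the vertices reaching `K` within `n` steps, so
`K = R 0 ⊆ R 1 ⊆ R 2`. Since the in-neighbourhood of any vertex contains a 2-king, every
vertex of `R 2` reaches a 2-king other than itself within two steps; such a 2-king lets a
vertex `x` of `Q` reach every other fiber within four steps and come back to its own fiber, so
`π ⁻¹' R 2` consists of 4-kings. If `R 2` is not everything, walking from a vertex outside it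
to a 2-king gives arcs entering `R 1 \ R 0` and `R 2 \ R 1`, and a short analysis of the
2-kings shows that `R 1` already has four vertices; hence `|R 2| ≥ 5`.
-/

open Relation Set

namespace KReach

variable {V : Type*} {A : V → V → Prop} {m n : ℕ} {x y z : V}

theorem refl (n : ℕ) (x : V) : KReach A n x x :=
  ⟨0, Nat.zero_le _, fun _ => x, rfl, rfl, fun _ h => absurd h (Nat.not_lt_zero _)⟩

theorem mono (hmn : m ≤ n) : KReach A m x y → KReach A n x y :=
  fun ⟨p, hp, f, hf⟩ => ⟨p, hp.trans hmn, f, hf⟩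

theorem single (h : A x y) : KReach A 1 x y := by
  refine ⟨1, le_rfl, fun i => if i = 0 then x else y, rfl, rfl, fun i hi => ?_⟩
  obtain rfl : i = 0 := by omega
  simpa using h

theorem trans (hxy : KReach A m x y) (hyz : KReach A n y z) : KReach A (m + n) x z := by
  obtain ⟨a, ha, f, hf0, hfa, hf⟩ := hxy
  obtain ⟨b, hb, g, hg0, hgb, hg⟩ := hyz
  have hsnd : ∀ i, a ≤ i → (if i ≤ a then f i else g (i - a)) = g (i - a) := by
    intro i hi
    split_ifs with h
    · obtain rfl : i = a := by omega
      simp [hfa, hg0]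
    · rfl
  refine ⟨a + b, by omega, fun i => if i ≤ a then f i else g (i - a), by simp [hf0], ?_,
    fun i hi => ?_⟩
  · exact (hsnd (a + b) (by omega)).trans (by rw [Nat.add_sub_cancel_left, hgb])
  · dsimp only
    by_cases hia : i < a
    · simp only [if_pos hia.le, if_pos (show i + 1 ≤ a by omega)]
      exact hf i hia
    · rw [hsnd i (by omega), hsnd (i + 1) (by omega), show i + 1 - a = i - a + 1 by omega]
      exact hg (i - a) (by omega)

theorem two (hxy : A x y) (hyz : A y z) : KReach A 2 x z :=
  (single hxy).trans (single hyz)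

theorem zero_iff : KReach A 0 x y ↔ x = y := by
  refine ⟨fun ⟨p, hp, f, hf0, hfp, _⟩ => ?_, fun h => h ▸ refl 0 x⟩
  obtain rfl : p = 0 := by omega
  exact hf0.symm.trans hfp

theorem one_iff : KReach A 1 x y ↔ x = y ∨ A x y := by
  refine ⟨fun ⟨p, hp, f, hf0, hfp, hf⟩ => ?_, ?_⟩
  · rcases Nat.le_one_iff_eq_zero_or_eq_one.1 hp with rfl | rfl
    · exact Or.inl (hf0.symm.trans hfp)
    · exact Or.inr (hf0 ▸ hfp ▸ hf 0 Nat.one_pos)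
  · rintro (rfl | h)
    exacts [refl 1 x, single h]

theorem reflTransGen (h : KReach A n x y) : ReflTransGen A x y := by
  obtain ⟨p, -, f, rfl, rfl, hf⟩ := h
  suffices ∀ j ≤ p, ReflTransGen A (f 0) (f j) from this p le_rfl
  intro j hj
  induction j with
  | zero => exact .refl
  | succ j ih => exact (ih (by omega)).tail (hf j (by omega))

end KReach

theorem Relation.ReflTransGen.exists_rel_notMem_mem {V : Type*} {A : V → V → Prop} {S : Set V}
    {a b : V} (h : ReflTransGen A a b) (ha : a ∉ S) (hb : b ∈ S) :
    ∃ c ∉ S, ∃ d ∈ S, A c d := by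
  induction h with
  | refl => exact absurd hb ha
  | @tail p q _ hpq ih =>
    by_cases hp : p ∈ S
    exacts [ih hp, ⟨p, hp, q, hb, hpq⟩]

section SemicompleteKings

variable {V : Type*} {A : V → V → Prop}

theorem exists_rel_of_reflTransGen [Nontrivial V] (hconn : ∀ a b : V, ReflTransGen A a b)
    (a : V) : ∃ p, A p a := by
  obtain ⟨i, hi⟩ := exists_ne a
  obtain ⟨c, -, _, rfl, hcd⟩ :=
    (hconn i a).exists_rel_notMem_mem (S := {a}) hi (mem_singleton a)
  exact ⟨c, hcd⟩

/-- Witnessed by a vertex of maximum out-degree within `S`. -/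
theorem exists_dominating_of_semicomplete [Finite V] (hirr : Irreflexive A)
    (hsemi : Semicomplete A) {S : Set V} (hS : S.Nonempty) :
    ∃ k ∈ S, ∀ y ∈ S, y ≠ k → ¬ A k y → ∃ z ∈ S, A k z ∧ A z y := by
  obtain ⟨k, hk, hmax⟩ := S.exists_max_image (fun c => {y ∈ S | A c y}.ncard) S.toFinite hS
  refine ⟨k, hk, fun y hy hyk hky => ?_⟩
  by_contra! hz
  have hyk' : A y k := (hsemi y k hyk).resolve_right hky
  have hsub : {c ∈ S | A k c} ⊂ {c ∈ S | A y c} := by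
    refine ssubset_iff_subset_ne.2 ⟨fun c ⟨hc, hkc⟩ => ⟨hc, ?_⟩, fun h => ?_⟩
    · have hcy : c ≠ y := fun h => hky (h ▸ hkc)
      exact (hsemi c y hcy).resolve_left (hz c hc hkc)
    · exact hirr k (h ▸ (show k ∈ {c ∈ S | A y c} from ⟨hk, hyk'⟩)).2
  exact (ncard_lt_ncard hsub).not_ge (hmax y hy)

variable (A) in
def twoKings : Set V := {k | IsKKing A 2 k}

variable (A) in
def reachTwoKing (n : ℕ) : Set V := {c | ∃ k ∈ twoKings A, KReach A n c k}

theorem twoKings_subset_reachTwoKing (n : ℕ) : twoKings A ⊆ reachTwoKing A n :=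
  fun k hk => ⟨k, hk, .refl n k⟩

theorem reachTwoKing_zero : reachTwoKing A 0 = twoKings A := by
  ext c
  exact ⟨fun ⟨k, hk, h⟩ => KReach.zero_iff.1 h ▸ hk, fun h => ⟨c, h, .refl 0 c⟩⟩

theorem reachTwoKing_mono {m n : ℕ} (hmn : m ≤ n) : reachTwoKing A m ⊆ reachTwoKing A n :=
  fun _ ⟨k, hk, h⟩ => ⟨k, hk, h.mono hmn⟩

theorem mem_reachTwoKing_succ {c d : V} {n : ℕ} (hcd : A c d) (hd : d ∈ reachTwoKing A n) :
    c ∈ reachTwoKing A (n + 1) :=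
  let ⟨k, hk, h⟩ := hd
  ⟨k, hk, add_comm 1 n ▸ (KReach.single hcd).trans h⟩

theorem exists_mem_reachTwoKing_succ_notMem (hconn : ∀ a b : V, ReflTransGen A a b) {n : ℕ}
    {u v : V} (hu : u ∈ twoKings A) (hv : v ∉ reachTwoKing A (n + 1)) :
    ∃ d ∈ reachTwoKing A (n + 1), d ∉ reachTwoKing A n := by
  obtain ⟨c, hc, d, hd, hcd⟩ :=
    (hconn v u).exists_rel_notMem_mem hv (twoKings_subset_reachTwoKing _ hu)
  exact ⟨d, hd, fun hd' => hc (mem_reachTwoKing_succ hcd hd')⟩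

theorem exists_rel_mem_twoKings [Finite V] (hirr : Irreflexive A) (hsemi : Semicomplete A)
    {a : V} (ha : ∃ p, A p a) : ∃ w, A w a ∧ w ∈ twoKings A := by
  obtain ⟨w, hwa, hw⟩ := exists_dominating_of_semicomplete hirr hsemi (S := {c | A c a}) ha
  refine ⟨w, hwa, fun y => ?_⟩
  by_cases hyw : y = w
  · rw [hyw]
    exact .refl 2 w
  by_cases hya : y = a
  · exact hya ▸ (KReach.single hwa).mono one_le_two
  by_cases hay : A a y
  · exact .two hwa hay
  by_cases hwy : A w y
  · exact (KReach.single hwy).mono one_le_two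
  obtain ⟨z, -, hwz, hzy⟩ := hw y ((hsemi y a hya).resolve_right hay) hyw hwy
  exact .two hwz hzy

theorem isKKing_two_of_rel (hsemi : Semicomplete A) {b k : V} (hbk : A b k)
    (h : ∀ c, A c k → c ≠ b → A k c) : IsKKing A 2 b := by
  intro c
  by_cases hck : c = k
  · exact hck ▸ (KReach.single hbk).mono one_le_two
  by_cases hkc : A k c
  · exact .two hbk hkc
  by_cases hcb : c = b
  · rw [hcb]
    exact .refl 2 b
  exact absurd (h c ((hsemi c k hck).resolve_right hkc) hcb) hkc

variable [Finite V] (hirr : Irreflexive A) (hsemi : Semicomplete A)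
  (hconn : ∀ a b : V, ReflTransGen A a b) (hin : ∀ a : V, ∃ p, A p a)
include hirr hsemi hin

theorem exists_mem_twoKings_ne_of_mem_reachTwoKing {c : V} (hc : c ∈ reachTwoKing A 2) :
    ∃ k ∈ twoKings A, k ≠ c ∧ KReach A 2 c k := by
  obtain ⟨k, hk, hck⟩ := hc
  by_cases hkc : k = c
  · subst hkc
    obtain ⟨w, hwk, hw⟩ := exists_rel_mem_twoKings hirr hsemi (hin k)
    exact ⟨w, hw, fun h => hirr k (h ▸ hwk), hk w⟩
  · exact ⟨k, hk, hkc, hck⟩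

include hconn

/-- If `R 1 = {u, w, b}` with `b` not a 2-king, the 2-kings `u`, `w` form a 2-cycle and `b`
dominates one of them, which makes `b` a 2-king after all. -/
theorem four_le_ncard_reachTwoKing_one {v : V} (hv : v ∉ twoKings A) :
    4 ≤ (reachTwoKing A 1).ncard := by
  have hK := twoKings_subset_reachTwoKing (A := A) 1
  obtain ⟨u, -, hu⟩ := exists_rel_mem_twoKings hirr hsemi (hin v)
  obtain ⟨w, hwu, hw⟩ := exists_rel_mem_twoKings hirr hsemi (hin u)
  obtain ⟨w', hw'w, hw'⟩ := exists_rel_mem_twoKings hirr hsemi (hin w)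
  by_contra! hlt
  suffices hsub : reachTwoKing A 1 ⊆ twoKings A by
    obtain ⟨d, hd, hdK⟩ := exists_mem_reachTwoKing_succ_notMem (n := 0) hconn hu
      (fun h => hv (hsub h))
    exact hdK (reachTwoKing_zero.symm ▸ hsub hd)
  intro b hb
  by_contra hbK
  obtain ⟨k, hk, hbk⟩ := hb
  have hbk : A b k := (KReach.one_iff.1 hbk).resolve_left fun h => hbK (h ▸ hk)
  have hR : reachTwoKing A 1 = {u, w, b} := by
    have hne : u ≠ w ∧ u ≠ b ∧ w ≠ b :=
      ⟨fun h => hirr u (h ▸ hwu), fun h => hbK (h ▸ hu), fun h => hbK (h ▸ hw)⟩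
    refine (eq_of_subset_of_ncard_le ?_ ?_).symm
    · exact insert_subset (hK hu) <|
        insert_subset (hK hw) (singleton_subset_iff.2 ⟨k, hk, .single hbk⟩)
    · rw [ncard_eq_three.2 ⟨u, w, b, hne.1, hne.2.1, hne.2.2, rfl⟩]
      omega
  have huw : A u w := by
    have := hR ▸ hK hw'
    rcases this with rfl | rfl | rfl
    exacts [hw'w, absurd hw'w (hirr _), absurd hw' hbK]
  have hk' : k = u ∨ k = w := by
    have := hR ▸ hK hk
    rcases this with rfl | rfl | rfl
    exacts [Or.inl rfl, Or.inr rfl, absurd hk hbK]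
  refine hbK (isKKing_two_of_rel hsemi hbk fun c hck hcb => ?_)
  have hc : c ∈ ({u, w, b} : Set V) := hR ▸ ⟨k, hk, .single hck⟩
  rcases hc with rfl | rfl | rfl <;> rcases hk' with rfl | rfl
  exacts [absurd hck (hirr _), hwu, huw, absurd hck (hirr _), absurd rfl hcb, absurd rfl hcb]

theorem five_le_ncard_reachTwoKing_two {v : V} (hv : v ∉ reachTwoKing A 2) :
    5 ≤ (reachTwoKing A 2).ncard := by
  have hvK : v ∉ twoKings A := fun h => hv (twoKings_subset_reachTwoKing 2 h)
  obtain ⟨u, -, hu⟩ := exists_rel_mem_twoKings hirr hsemi (hin v)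
  obtain ⟨d, hd, hd1⟩ := exists_mem_reachTwoKing_succ_notMem (n := 1) hconn hu hv
  calc 5 ≤ (insert d (reachTwoKing A 1)).ncard := by
        rw [ncard_insert_of_notMem hd1]
        have := four_le_ncard_reachTwoKing_one hirr hsemi hconn hin hvK
        omega
    _ ≤ (reachTwoKing A 2).ncard :=
        ncard_le_ncard (insert_subset hd (reachTwoKing_mono one_le_two))

end SemicompleteKings

namespace IsComposition

variable {ι W : Type*} {AT : ι → ι → Prop} {AQ : W → W → Prop} {π : W → ι}

theorem reflTransGen_map (hcomp : IsComposition AT AQ π) {x y : W}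
    (h : ReflTransGen AQ x y) : ReflTransGen AT (π x) (π y) :=
  h.lift' π fun a b hab => by
    show ReflTransGen AT (π a) (π b)
    by_cases he : π a = π b
    exacts [he ▸ .refl, .single ((hcomp.cross a b he).1 hab)]

/-- The inner vertices of a walk of `T` are lifted to arbitrary vertices of their fibers; the
lift is a walk of `Q` because consecutive vertices of a walk of an irreflexive `T` lie in
different fibers. -/
theorem kReach_lift (hcomp : IsComposition AT AQ π) (hTirr : Irreflexive AT) {x y : W} {n : ℕ}
    (hxy : π x ≠ π y) (h : KReach AT n (π x) (π y)) : KReach AQ n x y := by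
  obtain ⟨m, hm, g, hg0, hgm, hg⟩ := h
  have hm0 : m ≠ 0 := fun h => hxy (hg0.symm.trans (h ▸ hgm))
  let s := Function.surjInv hcomp.surj
  let f : ℕ → W := fun i => if i = 0 then x else if i = m then y else s (g i)
  have hf : ∀ i, π (f i) = g i := by
    intro i
    by_cases h0 : i = 0
    · simp [f, h0, hg0]
    by_cases hi : i = m
    · simp [f, hi, hm0, hgm]
    · simp [f, h0, hi, s, Function.surjInv_eq]
  refine ⟨m, hm, f, if_pos rfl, by simp [f, hm0], fun i hi => ?_⟩
  have hne : π (f i) ≠ π (f (i + 1)) := by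
    rw [hf, hf]
    exact fun h => hTirr _ (h ▸ hg i hi)
  exact (hcomp.cross _ _ hne).2 (by rw [hf, hf]; exact hg i hi)

theorem isKKing_four (hcomp : IsComposition AT AQ π) (hTirr : Irreflexive AT) {x : W} {k : ι}
    (hk : IsKKing AT 2 k) (hkx : k ≠ π x) (hxk : KReach AT 2 (π x) k) : IsKKing AQ 4 x := by
  intro y
  by_cases hy : π y = π x
  · obtain ⟨z, rfl⟩ := hcomp.surj k
    exact (hcomp.kReach_lift hTirr hkx.symm hxk).trans
      (hcomp.kReach_lift hTirr (hy ▸ hkx) (hk _))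
  · exact hcomp.kReach_lift hTirr (Ne.symm hy) (hxk.trans (hk _))

end IsComposition

theorem stmt13_general {ι W : Type*} [Fintype ι] [Fintype W]
    (AT : ι → ι → Prop) (AQ : W → W → Prop) (π : W → ι)
    (hcard : 2 ≤ Fintype.card ι)
    (hTirr : Irreflexive AT)
    (hsemi : Semicomplete AT) (hcomp : IsComposition AT AQ π)
    (hstrong : Strong AQ) (hn : 6 ≤ Fintype.card W) :
    5 ≤ {v : W | IsKKing AQ 4 v}.ncard := by
  have hconn : ∀ a b : ι, ReflTransGen AT a b := by
    intro a b
    obtain ⟨x, rfl⟩ := hcomp.surj a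
    obtain ⟨y, rfl⟩ := hcomp.surj b
    obtain ⟨n, hxy⟩ := hstrong x y
    exact hcomp.reflTransGen_map hxy.reflTransGen
  have : Nontrivial ι := Fintype.one_lt_card_iff_nontrivial.1 hcard
  have hin := exists_rel_of_reflTransGen hconn
  have hkings : π ⁻¹' reachTwoKing AT 2 ⊆ {v : W | IsKKing AQ 4 v} := fun x hx => by
    obtain ⟨k, hk, hkx, hxk⟩ := exists_mem_twoKings_ne_of_mem_reachTwoKing hTirr hsemi hin hx
    exact hcomp.isKKing_four hTirr hk hkx hxk
  by_cases hall : reachTwoKing AT 2 = univ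
  · rw [hall, preimage_univ] at hkings
    calc 5 ≤ (univ : Set W).ncard := by rw [ncard_univ, Nat.card_eq_fintype_card]; omega
      _ ≤ _ := ncard_le_ncard hkings
  · obtain ⟨v, hv⟩ := (ne_univ_iff_exists_notMem _).1 hall
    calc 5 ≤ (reachTwoKing AT 2).ncard := five_le_ncard_reachTwoKing_two hTirr hsemi hconn hin hv
      _ = (π '' (π ⁻¹' reachTwoKing AT 2)).ncard := by rw [image_preimage_eq _ hcomp.surj]
      _ ≤ (π ⁻¹' reachTwoKing AT 2).ncard := ncard_image_le
      _ ≤ _ := ncard_le_ncard hkings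

/-- Every strong semicomplete composition with at least six vertices has at least
five 4-kings. -/
theorem stmt13 {ι W : Type*} [Fintype ι] [Fintype W]
    (AT : ι → ι → Prop) (AQ : W → W → Prop) (π : W → ι)
    (hcard : 2 ≤ Fintype.card ι)
    (hTirr : Irreflexive AT) (hQirr : Irreflexive AQ)
    (hsemi : Semicomplete AT) (hcomp : IsComposition AT AQ π)
    (hstrong : Strong AQ) (hn : 6 ≤ Fintype.card W) :
    5 ≤ {v : W | IsKKing AQ 4 v}.ncard :=
  stmt13_general AT AQ π hcard hTirr hsemi hcomp hstrong hn
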